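/- arXiv:2410.05124 — 2 statements merged into one kernel-verified Lean document; each statement's English description precedes it below -/
import Mathlib

section
/- Single-step rejection-sampling coupling: Let $p$ be a distribution on $\mathcal{X}$ that is $\sigma$-smooth with respect to $\mu$. Then there exists a coupling of $X \sim p$ with i.i.d. samples $Z_1, \dots, Z_k \sim \mu$ such that $\mathbb{P}(X \notin \{Z_1,\dots,Z_k\}) \leq (1-\sigma)^k \leq e^{-\sigma k}$. -/
open MeasureTheory ProbabilityTheory Set
open scoped Classical

theorem nu_calc {𝓧 : Type} [MeasurableSpace 𝓧]
    (p μ : Measure 𝓧) [IsProbabilityMeasure p] [IsProbabilityMeasure μ]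
    (σ : ℝ) (hσ0 : 0 < σ) (hac : p ≪ μ)
    (hd : ∀ᵐ x ∂μ, p.rnDeriv μ x ≤ ENNReal.ofReal (1 / σ))
    (B : Set 𝓧) (hB : MeasurableSet B) :
    (μ.prod ((volume : Measure ℝ).restrict (Icc 0 1)))
      ({q : 𝓧 × ℝ | q.2 ≤ σ * (p.rnDeriv μ q.1).toReal} ∩ B ×ˢ univ)
      = ENNReal.ofReal σ * p B := by
  set f : 𝓧 → ℝ := fun x => (p.rnDeriv μ x).toReal with hf
  have hfm : Measurable f := (Measure.measurable_rnDeriv p μ).ennreal_toReal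
  set lam : Measure ℝ := (volume : Measure ℝ).restrict (Icc 0 1) with hlam
  set A : Set (𝓧 × ℝ) := {q : 𝓧 × ℝ | q.2 ≤ σ * f q.1} with hA
  have hAm : MeasurableSet A := measurableSet_le measurable_snd
    (measurable_const.mul (hfm.comp measurable_fst))
  have hsm : MeasurableSet (A ∩ B ×ˢ univ) := hAm.inter (hB.prod MeasurableSet.univ)
  rw [Measure.prod_apply hsm]
  have hslice : ∀ x : 𝓧, Prod.mk x ⁻¹' (A ∩ B ×ˢ univ) = if x ∈ B then Iic (σ * f x) else ∅ := by
    intro x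
    ext u
    by_cases hx : x ∈ B <;> simp [hA, hx, Set.mem_prod]
  have hae : ∀ᵐ x ∂μ, lam (Prod.mk x ⁻¹' (A ∩ B ×ˢ univ))
      = B.indicator (fun x => ENNReal.ofReal σ * p.rnDeriv μ x) x := by
    filter_upwards [hd, Measure.rnDeriv_lt_top p μ] with x hx hxt
    rw [hslice x]
    have hfx0 : 0 ≤ f x := ENNReal.toReal_nonneg
    have hfx1 : σ * f x ≤ 1 := by
      have : f x ≤ 1 / σ := by
        rw [hf]
        calc (p.rnDeriv μ x).toReal ≤ (ENNReal.ofReal (1/σ)).toReal :=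
          ENNReal.toReal_mono ENNReal.ofReal_ne_top hx
        _ = 1 / σ := ENNReal.toReal_ofReal (by positivity)
      calc σ * f x ≤ σ * (1/σ) := by nlinarith
      _ = 1 := by field_simp
    have hIic : lam (Iic (σ * f x)) = ENNReal.ofReal (σ * f x) := by
      rw [hlam, Measure.restrict_apply measurableSet_Iic]
      have : Iic (σ * f x) ∩ Icc 0 1 = Icc 0 (σ * f x) := by
        ext u
        simp only [mem_inter_iff, mem_Iic, mem_Icc]
        constructor
        · rintro ⟨h1, h2, h3⟩; exact ⟨h2, h1⟩
        · rintro ⟨h1, h2⟩; exact ⟨h2, h1, le_trans h2 hfx1⟩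
      rw [this, Real.volume_Icc, sub_zero]
    by_cases hx' : x ∈ B
    · rw [if_pos hx', indicator_of_mem hx', hIic, ENNReal.ofReal_mul hσ0.le,
        hf, ENNReal.ofReal_toReal hxt.ne]
    · rw [if_neg hx', indicator_of_notMem hx', measure_empty]
  rw [lintegral_congr_ae hae, lintegral_indicator hB _,
    lintegral_const_mul _ (Measure.measurable_rnDeriv p μ),
    Measure.setLIntegral_rnDeriv hac B]

theorem aux_coupling {𝓧 : Type} [MeasurableSpace 𝓧]
    (p μ : Measure 𝓧) [IsProbabilityMeasure p] [IsProbabilityMeasure μ]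
    (σ : ℝ) (hσ : σ ∈ Set.Ioc (0:ℝ) 1) (hac : p ≪ μ)
    (hd : ∀ᵐ x ∂μ, p.rnDeriv μ x ≤ ENNReal.ofReal (1 / σ)) (k : ℕ) :
    ∃ (Ω : Type) (mΩ : MeasurableSpace Ω) (P : Measure Ω)
      (_ : IsProbabilityMeasure P) (X : Ω → 𝓧) (Z : Fin k → Ω → 𝓧),
      Measurable X ∧ (∀ j, Measurable (Z j)) ∧
      Measure.map X P = p ∧ (∀ j, Measure.map (Z j) P = μ) ∧
      iIndepFun Z P ∧
      P {ω | ∀ j : Fin k, X ω ≠ Z j ω} ≤ ENNReal.ofReal ((1 - σ) ^ k) := by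
  obtain ⟨hσ0, hσ1⟩ := hσ
  set f : 𝓧 → ℝ := fun x => (p.rnDeriv μ x).toReal with hf
  have hfm : Measurable f := (Measure.measurable_rnDeriv p μ).ennreal_toReal
  set lam : Measure ℝ := (volume : Measure ℝ).restrict (Icc 0 1) with hlam
  haveI : IsProbabilityMeasure lam := ⟨by simp [hlam, Real.volume_Icc]⟩
  set ν : Measure (𝓧 × ℝ) := μ.prod lam with hν
  haveI : IsProbabilityMeasure ν := by rw [hν]; infer_instance
  set A : Set (𝓧 × ℝ) := {q : 𝓧 × ℝ | q.2 ≤ σ * f q.1} with hA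
  have hAm : MeasurableSet A := measurableSet_le measurable_snd
    (measurable_const.mul (hfm.comp measurable_fst))
  have hνAB : ∀ B : Set 𝓧, MeasurableSet B → ν (A ∩ B ×ˢ univ) = ENNReal.ofReal σ * p B :=
    fun B hB => nu_calc p μ σ hσ0 hac hd B hB
  have hνA : ν A = ENNReal.ofReal σ := by
    have := hνAB univ MeasurableSet.univ
    simpa using this
  have hνAc : ν Aᶜ = ENNReal.ofReal (1 - σ) := by
    rw [measure_compl hAm (measure_ne_top _ _), hνA, measure_univ,
      ENNReal.ofReal_sub _ hσ0.le, ENNReal.ofReal_one]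
  -- the sample space
  set π : Measure (Fin k → 𝓧 × ℝ) := Measure.pi (fun _ => ν) with hπ
  haveI : IsProbabilityMeasure π := by rw [hπ]; infer_instance
  set P : Measure ((Fin k → 𝓧 × ℝ) × 𝓧) := π.prod p with hP
  haveI hPprob : IsProbabilityMeasure P := by rw [hP]; infer_instance
  have hrect : ∀ (D : Fin k → Set (𝓧 × ℝ)) (B : Set 𝓧), (∀ i, MeasurableSet (D i)) →
      P ((univ.pi D) ×ˢ B) = (∏ i, ν (D i)) * p B := by
    intro D B hD
    rw [hP, Measure.prod_prod, hπ, Measure.pi_pi]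
  -- the i.i.d. samples
  set Z : Fin k → ((Fin k → 𝓧 × ℝ) × 𝓧) → 𝓧 := fun j ω => (ω.1 j).1 with hZ
  have hZm : ∀ j, Measurable (Z j) := fun j =>
    measurable_fst.comp ((measurable_pi_apply j).comp measurable_fst)
  have hZpre : ∀ (S : Finset (Fin k)) (sets : Fin k → Set 𝓧), (∀ i ∈ S, MeasurableSet (sets i)) →
      P (⋂ i ∈ S, Z i ⁻¹' sets i) = ∏ i ∈ S, μ (sets i) := by
    intro S sets hsets
    have hset : (⋂ i ∈ S, Z i ⁻¹' sets i)
        = (univ.pi fun i => if i ∈ S then sets i ×ˢ (univ : Set ℝ) else univ) ×ˢ (univ : Set 𝓧) := by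
      ext ω
      simp only [mem_iInter, mem_preimage, hZ, Set.mem_prod, Set.mem_pi, mem_univ, true_and,
        and_true]
      constructor
      · intro h i _
        by_cases hi : i ∈ S
        · rw [if_pos hi]; exact ⟨h i hi, mem_univ _⟩
        · rw [if_neg hi]; trivial
      · intro h i hi
        have := h i (mem_univ i)
        rw [if_pos hi] at this
        exact this.1
    rw [hset, hrect _ _ (fun i => by
      by_cases hi : i ∈ S
      · rw [if_pos hi]; exact (hsets i hi).prod MeasurableSet.univ
      · rw [if_neg hi]; exact MeasurableSet.univ), measure_univ, mul_one]
    have : ∀ i : Fin k, ν (if i ∈ S then sets i ×ˢ (univ : Set ℝ) else univ)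
        = if i ∈ S then μ (sets i) else 1 := by
      intro i
      by_cases hi : i ∈ S
      · rw [if_pos hi, if_pos hi, hν, Measure.prod_prod, measure_univ, mul_one]
      · rw [if_neg hi, if_neg hi, measure_univ]
    rw [Finset.prod_congr rfl fun i _ => this i, Finset.prod_ite_mem, Finset.univ_inter]
  have hZlaw : ∀ j, Measure.map (Z j) P = μ := by
    intro j
    ext s hs
    rw [Measure.map_apply (hZm j) hs]
    have := hZpre {j} (fun _ => s) (fun i _ => hs)
    simpa using this
  have hindep : iIndepFun Z P := by
    rw [iIndepFun_iff_measure_inter_preimage_eq_mul]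
    intro S sets hsets
    rw [hZpre S sets hsets]
    refine Finset.prod_congr rfl fun i hi => ?_
    have := hZpre {i} (fun _ => sets i) (fun _ _ => hsets i hi)
    simpa using this.symm
  
  -- the rejection-sampling variable X
  set T : ((Fin k → 𝓧 × ℝ) × 𝓧) → Finset (Fin k) :=
    fun ω => Finset.univ.filter (fun j => ω.1 j ∈ A) with hT
  set X : ((Fin k → 𝓧 × ℝ) × 𝓧) → 𝓧 :=
    fun ω => if h : (T ω).Nonempty then (ω.1 ((T ω).min' h)).1 else ω.2 with hX
  set F : Fin k → Set 𝓧 → Set ((Fin k → 𝓧 × ℝ) × 𝓧) := fun j B =>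
    (univ.pi fun i => if i < j then Aᶜ else if i = j then A ∩ B ×ˢ (univ : Set ℝ) else univ)
      ×ˢ (univ : Set 𝓧) with hF
  set G : Set 𝓧 → Set ((Fin k → 𝓧 × ℝ) × 𝓧) := fun B =>
    (univ.pi fun _ => Aᶜ) ×ˢ B with hG
  have hmemF : ∀ (j : Fin k) (B : Set 𝓧) ω, ω ∈ F j B ↔
      (∀ i, i < j → ω.1 i ∉ A) ∧ ω.1 j ∈ A ∧ (ω.1 j).1 ∈ B := by
    intro j B ω
    simp only [hF, Set.mem_prod, mem_univ, and_true, Set.mem_pi, true_implies]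
    constructor
    · intro h
      refine ⟨fun i hij => ?_, ?_, ?_⟩
      · have := h i; rw [if_pos hij] at this; exact fun hiA => this hiA
      · have := h j; rw [if_neg (lt_irrefl j), if_pos rfl] at this; exact this.1
      · have := h j; rw [if_neg (lt_irrefl j), if_pos rfl] at this; exact this.2.1
    · rintro ⟨h1, h2, h3⟩ i
      by_cases hij : i < j
      · rw [if_pos hij]; exact h1 i hij
      by_cases hij' : i = j
      · subst hij'; rw [if_neg hij, if_pos rfl]; exact ⟨h2, h3, mem_univ _⟩
      · rw [if_neg hij, if_neg hij']; trivial
  have hmemG : ∀ (B : Set 𝓧) ω, ω ∈ G B ↔ (∀ i, ω.1 i ∉ A) ∧ ω.2 ∈ B := by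
    intro B ω
    constructor
    · intro hω
      exact ⟨fun i => hω.1 i (mem_univ i), hω.2⟩
    · intro h
      exact ⟨fun i _ => h.1 i, h.2⟩
  have hXpre : ∀ B : Set 𝓧, X ⁻¹' B = (⋃ j, F j B) ∪ G B := by
    intro B
    ext ω
    simp only [Set.mem_preimage, Set.mem_union, Set.mem_iUnion]
    by_cases h : (T ω).Nonempty
    · set j := (T ω).min' h with hj
      have hjA : ω.1 j ∈ A := (Finset.mem_filter.1 ((T ω).min'_mem h)).2
      have hlt : ∀ i, i < j → ω.1 i ∉ A := by
        intro i hij hiA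
        have hiT : i ∈ T ω := by rw [hT]; simp [hiA]
        exact absurd ((T ω).min'_le i hiT) (not_le.2 hij)
      have hXω : X ω = (ω.1 j).1 := by rw [hX]; simp only [dif_pos h]; rfl
      constructor
      · intro hXB
        exact Or.inl ⟨j, (hmemF j B ω).2 ⟨hlt, hjA, by rwa [hXω] at hXB⟩⟩
      · rintro (⟨j', hj'⟩ | hGω)
        · obtain ⟨h1, h2, h3⟩ := (hmemF j' B ω).1 hj'
          have hjj' : j = j' := by
            rcases lt_trichotomy j j' with hlt' | heq | hgt
            · exact absurd hjA (h1 j hlt')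
            · exact heq
            · exact absurd h2 (hlt j' hgt)
          rw [hXω, hjj']; exact h3
        · exact absurd hjA (((hmemG B ω).1 hGω).1 j)
    · have hall : ∀ i, ω.1 i ∉ A := by
        intro i hi
        exact h ⟨i, by rw [hT]; simp [hi]⟩
      have hXω : X ω = ω.2 := by rw [hX]; simp only [dif_neg h]
      constructor
      · intro hXB
        exact Or.inr ((hmemG B ω).2 ⟨hall, by rwa [hXω] at hXB⟩)
      · rintro (⟨j, hj⟩ | hGω)
        · exact absurd ((hmemF j B ω).1 hj).2.1 (hall j)
        · rw [hXω]; exact ((hmemG B ω).1 hGω).2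
  have hFm : ∀ (j : Fin k) (B : Set 𝓧), MeasurableSet B → MeasurableSet (F j B) := by
    intro j B hB
    refine MeasurableSet.prod (MeasurableSet.univ_pi fun i => ?_) MeasurableSet.univ
    by_cases h1 : i < j
    · rw [if_pos h1]; exact hAm.compl
    by_cases h2 : i = j
    · rw [if_neg h1, if_pos h2]; exact hAm.inter (hB.prod MeasurableSet.univ)
    · rw [if_neg h1, if_neg h2]; exact MeasurableSet.univ
  have hGm : ∀ B : Set 𝓧, MeasurableSet B → MeasurableSet (G B) := by
    intro B hB
    exact MeasurableSet.prod (MeasurableSet.univ_pi fun _ => hAm.compl) hB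
  have hXm : Measurable X := by
    intro B hB
    rw [hXpre B]
    exact ((MeasurableSet.iUnion fun j => hFm j B hB)).union (hGm B hB)
  -- measures of the pieces
  have hPF : ∀ (j : Fin k) (B : Set 𝓧), MeasurableSet B →
      P (F j B) = ENNReal.ofReal (σ * (1 - σ) ^ (j : ℕ)) * p B := by
    intro j B hB
    rw [hF]
    rw [hrect _ _ (fun i => by
      by_cases h1 : i < j
      · rw [if_pos h1]; exact hAm.compl
      by_cases h2 : i = j
      · rw [if_neg h1, if_pos h2]; exact hAm.inter (hB.prod MeasurableSet.univ)
      · rw [if_neg h1, if_neg h2]; exact MeasurableSet.univ), measure_univ, mul_one]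
    have hsplit : ∀ i : Fin k,
        ν (if i < j then Aᶜ else if i = j then A ∩ B ×ˢ (univ : Set ℝ) else univ)
        = (if i < j then ENNReal.ofReal (1 - σ) else 1)
          * (if i = j then ENNReal.ofReal σ * p B else 1) := by
      intro i
      by_cases h1 : i < j
      · rw [if_pos h1, if_pos h1, if_neg (ne_of_lt h1), mul_one, hνAc]
      by_cases h2 : i = j
      · rw [if_neg h1, if_pos h2, if_neg h1, if_pos h2, one_mul, hνAB B hB]
      · rw [if_neg h1, if_neg h2, if_neg h1, if_neg h2, one_mul, measure_univ]
    rw [Finset.prod_congr rfl fun i _ => hsplit i, Finset.prod_mul_distrib]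
    have h1 : (∏ i : Fin k, if i < j then ENNReal.ofReal (1 - σ) else 1)
        = ENNReal.ofReal (1 - σ) ^ (j : ℕ) := by
      rw [← Finset.prod_filter, Finset.prod_const,
        show (Finset.univ.filter fun i : Fin k => i < j) = Finset.Iio j from
          Finset.filter_gt_eq_Iio, Fin.card_Iio]
    have h2 : (∏ i : Fin k, if i = j then ENNReal.ofReal σ * p B else 1)
        = ENNReal.ofReal σ * p B := by
      rw [Finset.prod_ite_eq' Finset.univ j (fun _ => ENNReal.ofReal σ * p B),
        if_pos (Finset.mem_univ j)]
    rw [h1, h2, ENNReal.ofReal_mul hσ0.le, ENNReal.ofReal_pow (by linarith), mul_assoc]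
    ring_nf
  have hPG : ∀ B : Set 𝓧, MeasurableSet B →
      P (G B) = ENNReal.ofReal ((1 - σ) ^ k) * p B := by
    intro B hB
    rw [hG, hrect _ _ (fun _ => hAm.compl), Finset.prod_const, Finset.card_univ,
      Fintype.card_fin, hνAc, ENNReal.ofReal_pow (by linarith)]
  -- the law of X
  have hdisjF : ∀ j j' : Fin k, j < j' → ∀ B : Set 𝓧, Disjoint (F j B) (F j' B) := by
    intro j j' hjj' B
    rw [Set.disjoint_left]
    intro ω hω hω'
    exact absurd ((hmemF j B ω).1 hω).2.1 (((hmemF j' B ω).1 hω').1 j hjj')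
  have hXlaw : Measure.map X P = p := by
    ext B hB
    rw [Measure.map_apply hXm hB, hXpre B]
    have hdisj2 : Disjoint (⋃ j, F j B) (G B) := by
      rw [Set.disjoint_left]
      intro ω hω hω'
      obtain ⟨j, hj⟩ := mem_iUnion.1 hω
      exact absurd ((hmemF j B ω).1 hj).2.1 (((hmemG B ω).1 hω').1 j)
    rw [measure_union hdisj2 (hGm B hB),
      measure_iUnion (fun j j' hne => by
        rcases hne.lt_or_gt with h | h
        · exact hdisjF j j' h B
        · exact (hdisjF j' j h B).symm) (fun j => hFm j B hB),
      tsum_fintype]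
    have hsum : ∀ j : Fin k, P (F j B) = ENNReal.ofReal (σ * (1 - σ) ^ (j : ℕ)) * p B :=
      fun j => hPF j B hB
    rw [Finset.sum_congr rfl fun j _ => hsum j, hPG B hB, ← Finset.sum_mul, ← add_mul]
    have hone : (∑ j : Fin k, ENNReal.ofReal (σ * (1 - σ) ^ (j : ℕ)))
        + ENNReal.ofReal ((1 - σ) ^ k) = 1 := by
      have hr : ∀ j : ℕ, (0:ℝ) ≤ σ * (1 - σ) ^ j :=
        fun j => mul_nonneg hσ0.le (pow_nonneg (by linarith) j)
      rw [show (∑ j : Fin k, ENNReal.ofReal (σ * (1 - σ) ^ (j : ℕ)))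
          = ∑ j ∈ Finset.range k, ENNReal.ofReal (σ * (1 - σ) ^ j) from
          Fin.sum_univ_eq_sum_range (fun j => ENNReal.ofReal (σ * (1 - σ) ^ j)) k,
        ← ENNReal.ofReal_sum_of_nonneg (fun j _ => hr j),
        ← ENNReal.ofReal_add (Finset.sum_nonneg fun j _ => hr j) (pow_nonneg (by linarith) k)]
      have hreal : (∑ j ∈ Finset.range k, σ * (1 - σ) ^ j) + (1 - σ) ^ k = 1 := by
        rw [← Finset.mul_sum]
        have h := geom_sum_mul (1 - σ) k
        nlinarith [h]
      rw [hreal, ENNReal.ofReal_one]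
    rw [hone, one_mul]
  -- the miss probability
  have hmiss : P {ω | ∀ j : Fin k, X ω ≠ Z j ω} ≤ ENNReal.ofReal ((1 - σ) ^ k) := by
    have hsub : {ω | ∀ j : Fin k, X ω ≠ Z j ω} ⊆ G univ := by
      intro ω hω
      rw [hmemG]
      refine ⟨fun i hiA => ?_, mem_univ _⟩
      have hne : (T ω).Nonempty := ⟨i, by rw [hT]; simp [hiA]⟩
      have hjA : ω.1 ((T ω).min' hne) ∈ A := (Finset.mem_filter.1 ((T ω).min'_mem hne)).2
      have hXω : X ω = Z ((T ω).min' hne) ω := by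
        rw [hX, hZ]; simp only [dif_pos hne]
      exact hω ((T ω).min' hne) hXω
    calc P {ω | ∀ j : Fin k, X ω ≠ Z j ω} ≤ P (G univ) := measure_mono hsub
    _ = ENNReal.ofReal ((1 - σ) ^ k) := by
        rw [hPG univ MeasurableSet.univ, measure_univ, mul_one]
  exact ⟨_, _, P, hPprob, X, Z, hXm, hZm, hXlaw, hZlaw, hindep, hmiss⟩

/-- Single-step rejection-sampling coupling: if `p` is `σ`-smooth with respect to `μ`
(`p ≪ μ` with density bounded by `1/σ` `μ`-a.e.), there is a coupling of `X ~ p` with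
i.i.d. `Z 1, …, Z k ~ μ` such that
`P(X ∉ {Z 1, …, Z k}) ≤ (1-σ)^k ≤ e^{-σ k}`. -/
theorem single_step_rejection_coupling {𝓧 : Type*} [MeasurableSpace 𝓧]
    [StandardBorelSpace 𝓧] [Nonempty 𝓧]
    (p μ : Measure 𝓧) [IsProbabilityMeasure p] [IsProbabilityMeasure μ]
    (σ : ℝ) (hσ : σ ∈ Set.Ioc (0:ℝ) 1) (hac : p ≪ μ)
    (hd : ∀ᵐ x ∂μ, p.rnDeriv μ x ≤ ENNReal.ofReal (1 / σ)) (k : ℕ) (hk : 1 ≤ k) :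
    ∃ (Ω : Type) (mΩ : MeasurableSpace Ω) (P : Measure Ω)
      (_ : IsProbabilityMeasure P) (X : Ω → 𝓧) (Z : Fin k → Ω → 𝓧),
      Measurable X ∧ (∀ j, Measurable (Z j)) ∧
      Measure.map X P = p ∧ (∀ j, Measure.map (Z j) P = μ) ∧
      iIndepFun Z P ∧
      P {ω | ∀ j : Fin k, X ω ≠ Z j ω} ≤ ENNReal.ofReal ((1 - σ) ^ k) ∧
      (1 - σ) ^ k ≤ Real.exp (-σ * k) := by
  obtain ⟨e, he⟩ := exists_measurableEmbedding_real 𝓧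
  set p' : Measure ℝ := Measure.map e p with hp'
  set μ' : Measure ℝ := Measure.map e μ with hμ'
  haveI : IsProbabilityMeasure p' := Measure.isProbabilityMeasure_map he.measurable.aemeasurable
  haveI : IsProbabilityMeasure μ' := Measure.isProbabilityMeasure_map he.measurable.aemeasurable
  have hac' : p' ≪ μ' := he.absolutelyContinuous_map hac
  have hd' : ∀ᵐ y ∂μ', p'.rnDeriv μ' y ≤ ENNReal.ofReal (1 / σ) := by
    rw [hμ', he.ae_map_iff]
    filter_upwards [he.rnDeriv_map p μ, hd] with x hx hx2
    rw [← hp', ← hμ'] at hx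
    rw [hx]
    exact hx2
  obtain ⟨Ω, mΩ, P, hPprob, X', Z', hX'm, hZ'm, hX'law, hZ'law, hindep', hmiss'⟩ :=
    aux_coupling p' μ' σ hσ hac' hd' k
  obtain ⟨g, hgm, hge⟩ := he.exists_measurable_extend (measurable_id : Measurable (id : 𝓧 → 𝓧))
    (fun _ => ‹Nonempty 𝓧›)
  refine ⟨Ω, mΩ, P, hPprob, g ∘ X', fun j => g ∘ Z' j, hgm.comp hX'm,
    fun j => hgm.comp (hZ'm j), ?_, ?_, ?_, ?_, ?_⟩
  · rw [← Measure.map_map hgm hX'm, hX'law, hp', Measure.map_map hgm he.measurable, hge,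
      Measure.map_id]
  · intro j
    rw [← Measure.map_map hgm (hZ'm j), hZ'law j, hμ', Measure.map_map hgm he.measurable, hge,
      Measure.map_id]
  · exact hindep'.comp (fun _ => g) (fun _ => hgm)
  · refine le_trans (measure_mono ?_) hmiss'
    intro ω hω j hXZ
    exact hω j (by show g (X' ω) = g (Z' j ω); rw [hXZ])
  · have h1 : 1 - σ ≤ Real.exp (-σ) := by
      have := Real.add_one_le_exp (-σ)
      linarith
    calc (1 - σ) ^ k ≤ (Real.exp (-σ)) ^ k :=
      pow_le_pow_left₀ (by linarith [hσ.2]) h1 k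
    _ = Real.exp (-σ * k) := by rw [← Real.exp_nat_mul, mul_comm]
end

section
/- Smoothness is preserved by the conditional subsequence construction: Let $(x_t)_{t\in[T]}$ be adapted to a filtration $(\mathcal{H}_t)$ with each conditional law $x_t \mid \mathcal{H}_{t-1}$ being $\sigma$-smooth with respect to $\mu$. Let $(\tau_a)_{a \geq 1}$ be an increasing sequence of stopping times (each $\{\tau_a = t\}$ being $\mathcal{H}_{t-1}$-measurable) and set $z_a := x_{\tau_a}$ whenever $\tau_a \leq T$. Then the process $(z_a)$ is also $\sigma$-smooth with respect to $\mu$: for each $a$, the conditional law of $z_a$ given $(z_1, \dots, z_{a-1})$ (and the event $\tau_a \leq T$) is $\sigma$-smooth with respect to $\mu$. -/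
open MeasureTheory

lemma aux_min_meas {Ω : Type*} {m0 : MeasurableSpace Ω} (ℋ : Filtration ℕ m0)
    (τi : Ω → ℕ) (h1 : ∀ ω, 1 ≤ τi ω)
    (hpred : ∀ s, MeasurableSet[ℋ s] {ω | τi ω = s + 1}) (t : ℕ) :
    Measurable[ℋ t] (fun ω => min (τi ω) t) := by
  have heq : ∀ s, s ≤ t → MeasurableSet[ℋ t] {ω | τi ω = s} := by
    intro s hs
    match s with
    | 0 =>
      have : {ω | τi ω = 0} = ∅ :=
        Set.eq_empty_iff_forall_notMem.2 (fun ω hω => by have := h1 ω; simp at hω; omega)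
      rw [this]; exact @MeasurableSet.empty Ω (ℋ t)
    | s + 1 => exact ℋ.mono (by omega) _ (hpred s)
  apply @measurable_to_countable' ℕ Ω _ _ (ℋ t)
  intro n
  rcases lt_trichotomy n t with h | h | h
  · have : (fun ω => min (τi ω) t) ⁻¹' {n} = {ω | τi ω = n} := by
      ext ω
      simp only [Set.mem_preimage, Set.mem_singleton_iff, Set.mem_setOf_eq]
      omega
    rw [this]; exact heq n h.le
  · have : (fun ω => min (τi ω) t) ⁻¹' {n} = (⋃ k ∈ Finset.range t, {ω | τi ω = k})ᶜ := by
      ext ω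
      simp only [Set.mem_preimage, Set.mem_singleton_iff, Set.mem_compl_iff,
        Set.mem_iUnion, Finset.mem_range, Set.mem_setOf_eq, not_exists, exists_prop]
      constructor
      · intro hm k hk; omega
      · intro hall
        have hle : t ≤ τi ω := by
          by_contra hc
          push_neg at hc
          exact hall _ ⟨hc, rfl⟩
        omega
    rw [this]
    exact (MeasurableSet.biUnion (Finset.range t).countable_toSet
      (fun k hk => heq k (by simp only [Finset.mem_coe, Finset.mem_range] at hk; omega))).compl
  · have : (fun ω => min (τi ω) t) ⁻¹' {n} = ∅ := by
      ext ω
      simp only [Set.mem_preimage, Set.mem_singleton_iff, Set.mem_empty_iff_false, iff_false]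
      omega
    rw [this]; exact @MeasurableSet.empty Ω (ℋ t)

lemma aux_stopval {𝓧 : Type*} [MeasurableSpace 𝓧] {Ω : Type*} {m0 : MeasurableSpace Ω}
    (ℋ : Filtration ℕ m0) (x : ℕ → Ω → 𝓧) (hadapt : ∀ t, Measurable[ℋ t] (x t))
    (τi : Ω → ℕ) (h1 : ∀ ω, 1 ≤ τi ω)
    (hpred : ∀ s, MeasurableSet[ℋ s] {ω | τi ω = s + 1}) (t : ℕ) :
    Measurable[ℋ t] (fun ω => x (min (τi ω) t) ω) := by
  intro A hA
  have hdecomp : (fun ω => x (min (τi ω) t) ω) ⁻¹' A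
      = ⋃ s ∈ Finset.range (t + 1), ((fun ω => min (τi ω) t) ⁻¹' {s} ∩ x s ⁻¹' A) := by
    ext ω
    simp only [Set.mem_preimage, Set.mem_iUnion, Finset.mem_range, Set.mem_inter_iff,
      Set.mem_singleton_iff, exists_prop]
    constructor
    · intro h; exact ⟨min (τi ω) t, by omega, rfl, h⟩
    · rintro ⟨s, _, hmin, h⟩; rwa [hmin]
  rw [hdecomp]
  refine MeasurableSet.biUnion (Finset.range (t + 1)).countable_toSet (fun s hs => ?_)
  have hst : s ≤ t := Nat.lt_succ_iff.mp (Finset.mem_range.mp hs)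
  exact ((aux_min_meas ℋ τi h1 hpred t) (measurableSet_singleton s)).inter
    (ℋ.mono hst _ (hadapt s hA))

lemma aux_key {𝓧 : Type*} [MeasurableSpace 𝓧] {Ω : Type*} {m0 : MeasurableSpace Ω}
    (ℋ : Filtration ℕ m0) (x : ℕ → Ω → 𝓧) (hadapt : ∀ t, Measurable[ℋ t] (x t))
    (τ : ℕ → Ω → ℕ) (hτ1 : ∀ a ω, 1 ≤ τ a ω)
    (hτmono : ∀ a ω, τ a ω < τ (a + 1) ω)
    (hpred : ∀ a t, MeasurableSet[ℋ t] {ω | τ a ω = t + 1})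
    (a t : ℕ) (B : Set (Fin a → 𝓧)) (hB : MeasurableSet B) :
    MeasurableSet[ℋ t] ({ω | τ a ω = t + 1} ∩ (fun ω (i : Fin a) => x (τ i ω) ω) ⁻¹' B) := by
  have hg : Measurable[ℋ t] (fun ω (i : Fin a) => x (min (τ i ω) t) ω) :=
    (@measurable_pi_iff Ω (Fin a) (fun _ => 𝓧) (ℋ t) _ _).mpr
      (fun i => aux_stopval ℋ x hadapt (τ i) (hτ1 i) (hpred i) t)
  have hset : {ω | τ a ω = t + 1} ∩ (fun ω (i : Fin a) => x (τ i ω) ω) ⁻¹' B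
      = {ω | τ a ω = t + 1} ∩ (fun ω (i : Fin a) => x (min (τ i ω) t) ω) ⁻¹' B := by
    ext ω
    simp only [Set.mem_inter_iff, Set.mem_setOf_eq, Set.mem_preimage]
    refine and_congr_right fun hω => ?_
    have heq : (fun i : Fin a => x (τ i ω) ω) = fun i : Fin a => x (min (τ i ω) t) ω := by
      funext i
      have hmono : StrictMono (fun b => τ b ω) := strictMono_nat_of_lt_succ (fun b => hτmono b ω)
      have h1 : τ i ω < τ a ω := hmono i.2
      have h2 : τ i ω ≤ t := by omega
      rw [min_eq_left h2]
    rw [heq]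
  rw [hset]
  exact (hpred a t).inter (hg hB)

/-- Smoothness is preserved by predictable subsequence selection: if `(x t)` is adapted
to `ℋ`, each conditional law of `x (t+1)` given `ℋ t` is `σ`-smooth with respect to `μ`
(integrated form), and `(τ a)` is an increasing sequence of predictable selection times
(`{τ a = t+1}` is `ℋ t`-measurable), then the conditional law of `z a = x (τ a)` given
`(z 0, …, z (a-1))`, on the event `τ a ≤ T`, is again `σ`-smooth with respect to `μ`. -/
theorem subsequence_smooth {𝓧 : Type*} [MeasurableSpace 𝓧]
    {Ω : Type*} {m0 : MeasurableSpace Ω} (P : Measure Ω) [IsProbabilityMeasure P]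
    (μ : Measure 𝓧) [IsProbabilityMeasure μ] (σ : ℝ) (hσ : σ ∈ Set.Ioc (0:ℝ) 1)
    (ℋ : Filtration ℕ m0) (T : ℕ)
    (x : ℕ → Ω → 𝓧) (hadapt : ∀ t, Measurable[ℋ t] (x t))
    (hsmooth : ∀ t (A : Set 𝓧), MeasurableSet A → ∀ S : Set Ω,
      MeasurableSet[ℋ t] S →
      P (S ∩ (x (t + 1)) ⁻¹' A) ≤ ENNReal.ofReal (1 / σ) * μ A * P S)
    (τ : ℕ → Ω → ℕ) (hτ1 : ∀ a ω, 1 ≤ τ a ω)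
    (hτmono : ∀ a ω, τ a ω < τ (a + 1) ω)
    (hpred : ∀ a t, MeasurableSet[ℋ t] {ω | τ a ω = t + 1}) :
    ∀ (a : ℕ) (A : Set 𝓧) (S : Set Ω), MeasurableSet A →
      MeasurableSet[MeasurableSpace.comap
        (fun ω (i : Fin a) => x (τ i ω) ω) MeasurableSpace.pi] S →
      P ({ω | τ a ω ≤ T ∧ x (τ a ω) ω ∈ A} ∩ S)
        ≤ ENNReal.ofReal (1 / σ) * μ A * P ({ω | τ a ω ≤ T} ∩ S) := by
  intro a A S hA hS
  obtain ⟨B, hB, rfl⟩ := hS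
  set z := fun ω (i : Fin a) => x (τ i ω) ω with hz
  have hkey : ∀ t, MeasurableSet[ℋ t] ({ω | τ a ω = t + 1} ∩ z ⁻¹' B) :=
    fun t => aux_key ℋ x hadapt τ hτ1 hτmono hpred a t B hB
  have hdisj : ∀ (f : ℕ → Set Ω), (∀ t, f t ⊆ {ω | τ a ω = t + 1}) →
      (↑(Finset.range T) : Set ℕ).PairwiseDisjoint f := by
    intro f hf i _ j _ hij
    refine Set.disjoint_left.2 fun ω hωi hωj => hij ?_
    have h1 := hf i hωi
    have h2 := hf j hωj
    simp only [Set.mem_setOf_eq] at h1 h2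
    omega
  have hLeq : {ω | τ a ω ≤ T ∧ x (τ a ω) ω ∈ A} ∩ z ⁻¹' B
      = ⋃ t ∈ Finset.range T, (({ω | τ a ω = t + 1} ∩ z ⁻¹' B) ∩ x (t + 1) ⁻¹' A) := by
    ext ω
    simp only [Set.mem_inter_iff, Set.mem_setOf_eq, Set.mem_preimage, Set.mem_iUnion,
      Finset.mem_range, exists_prop]
    constructor
    · rintro ⟨⟨hT, hxA⟩, hBω⟩
      have h1 := hτ1 a ω
      refine ⟨τ a ω - 1, by omega, ⟨⟨by omega, hBω⟩, ?_⟩⟩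
      have he : τ a ω - 1 + 1 = τ a ω := by omega
      rw [he]; exact hxA
    · rintro ⟨t, ht, ⟨⟨hτe, hBω⟩, hxA⟩⟩
      exact ⟨⟨by omega, by rw [hτe]; exact hxA⟩, hBω⟩
  have hReq : {ω | τ a ω ≤ T} ∩ z ⁻¹' B
      = ⋃ t ∈ Finset.range T, ({ω | τ a ω = t + 1} ∩ z ⁻¹' B) := by
    ext ω
    simp only [Set.mem_inter_iff, Set.mem_setOf_eq, Set.mem_preimage, Set.mem_iUnion,
      Finset.mem_range, exists_prop]
    constructor
    · rintro ⟨hT, hBω⟩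
      have h1 := hτ1 a ω
      exact ⟨τ a ω - 1, by omega, by omega, hBω⟩
    · rintro ⟨t, ht, hτe, hBω⟩
      exact ⟨by omega, hBω⟩
  rw [hLeq, hReq,
    measure_biUnion_finset
      (hdisj _ (fun t ω hω => hω.1.1))
      (fun t _ => ((ℋ.le t _ (hkey t)).inter (ℋ.le (t + 1) _ (hadapt (t + 1) hA)))),
    measure_biUnion_finset
      (hdisj _ (fun t ω hω => hω.1))
      (fun t _ => ℋ.le t _ (hkey t)),
    Finset.mul_sum]
  exact Finset.sum_le_sum (fun t _ => hsmooth t A hA _ (hkey t))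
end
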